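/- For 0 < α(z₁) < 1 and α(z₂) ∉ ℤ, the double series g(z₁,z₂;τ) = Σ_{(n+α(z₁))(m+α(z₂))>0} sign(m+α(z₂))·e((n+m/2)m·τ + m z₁ + (m+n) z₂) equals the single series Σ_{m∈ℤ} e(τm²/2 + m(z₁+z₂))/(1 − e(mτ + z₂)), obtained by summing first over n. -/

import Mathlib

open Complex

noncomputable def e (w : ℂ) : ℂ := Complex.exp (2 * Real.pi * Complex.I * w)

noncomputable def theta (z τ : ℂ) : ℂ := ∑' n : ℤ, e (τ * n ^ 2 / 2 + n * z)

noncomputable def thetaD (z τ : ℂ) : ℂ := deriv (fun w => theta w τ) z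

noncomputable def al (τ z : ℂ) : ℝ := z.im / τ.im

noncomputable def sgn (t : ℝ) : ℂ := if 0 < t then 1 else -1

/-- term of the Kronecker-Eisenstein series, indexed by `(m, n) : ℤ × ℤ`. -/
noncomputable def fterm (τ z₁ z₂ : ℂ) (p : ℤ × ℤ) : ℂ :=
  if 0 < (al τ z₁ + p.1) * (al τ z₂ + p.2) then
    sgn (al τ z₁ + p.1) * e (τ * p.1 * p.2 + p.2 * z₁ + p.1 * z₂)
  else 0

noncomputable def fKr (z₁ z₂ τ : ℂ) : ℂ := ∑' p : ℤ × ℤ, fterm τ z₁ z₂ p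

noncomputable def kappa (y x τ : ℂ) : ℂ :=
  ∑' n : ℤ, e (τ * n ^ 2 / 2 + n * x) / (e (n * τ) - e y)

/-- term of the trapezoid series `g`, indexed by `(m, n) : ℤ × ℤ`. -/
noncomputable def gterm (τ z₁ z₂ : ℂ) (p : ℤ × ℤ) : ℂ :=
  if 0 < ((p.2 : ℝ) + al τ z₁) * ((p.1 : ℝ) + al τ z₂) then
    sgn ((p.1 : ℝ) + al τ z₂) *
      e (((p.2 : ℂ) + p.1 / 2) * p.1 * τ + p.1 * z₁ + ((p.1 : ℂ) + p.2) * z₂)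
  else 0

noncomputable def gF (z₁ z₂ τ : ℂ) : ℂ := ∑' p : ℤ × ℤ, gterm τ z₁ z₂ p

noncomputable def g0 (z₁ z₂ τ : ℂ) : ℂ :=
  ∑' m : ℤ, e (τ * m ^ 2 / 2 + m * (z₁ + z₂)) / (1 - e (m * τ + z₂))

/-- term of the series `h₀`, indexed by `(m, n) : ℤ × ℤ`. -/
noncomputable def hterm (τ x : ℂ) (p : ℤ × ℤ) : ℂ :=
  if 0 < ((p.1 : ℝ) + 1 / 2) * ((p.2 : ℝ) + 1 / 2) then
    sgn ((p.1 : ℝ) + 1 / 2) *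
      e (τ / 2 * (2 * p.1 ^ 2 + 4 * p.1 * p.2 + p.2 ^ 2) + p.2 * x)
  else 0

noncomputable def h0 (τ x : ℂ) : ℂ := ∑' p : ℤ × ℤ, hterm τ x p

def notInt (t : ℝ) : Prop := ∀ k : ℤ, t ≠ (k : ℝ)

/-! ### Auxiliary lemmas -/

lemma e_add (a b : ℂ) : e (a + b) = e a * e b := by
  rw [e, e, e, ← Complex.exp_add]; ring_nf

lemma e_int (n : ℤ) (w : ℂ) : e ((n : ℂ) * w) = e w ^ n := by
  rw [e, e, ← Complex.exp_int_mul]; congr 1; ring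

lemma e_ne_zero (w : ℂ) : e w ≠ 0 := Complex.exp_ne_zero _

lemma norm_e (w : ℂ) : ‖e w‖ = Real.exp (-(2 * Real.pi * w.im)) := by
  rw [e, Complex.norm_exp]
  congr 1
  have h : 2 * (Real.pi : ℂ) * Complex.I * w = ((2 * Real.pi : ℝ) : ℂ) * (Complex.I * w) := by
    push_cast; ring
  rw [h, Complex.re_ofReal_mul, Complex.I_mul_re]
  ring

lemma sumexp {c : ℝ} (hc : 0 < c) : Summable fun m : ℤ => Real.exp (-(c * |(m : ℝ)|)) := by
  have hlt : Real.exp (-c) < 1 := Real.exp_lt_one_iff.2 (by linarith)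
  have hgeom : Summable fun k : ℕ => Real.exp (-c) ^ k :=
    summable_geometric_of_lt_one (Real.exp_nonneg _) hlt
  apply Summable.of_nat_of_neg_add_one
  · refine hgeom.congr fun k => ?_
    rw [← Real.exp_nat_mul]
    congr 1
    push_cast
    rw [_root_.abs_of_nonneg (by positivity)]
    ring
  · refine Summable.of_nonneg_of_le (fun k => Real.exp_nonneg _) (fun k => ?_) hgeom
    have h1 : Real.exp (-(c * |((-((k : ℤ)) - 1 : ℤ) : ℝ)|)) = Real.exp (-c) ^ (k + 1) := by
      rw [← Real.exp_nat_mul]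
      congr 1
      push_cast
      rw [_root_.abs_of_nonpos (by linarith)]
      ring
    have h2 : ((-((k : ℤ) + 1) : ℤ) : ℝ) = ((-(k : ℤ) - 1 : ℤ) : ℝ) := by push_cast; ring
    calc Real.exp (-(c * |((-((k : ℤ) + 1) : ℤ) : ℝ)|))
        = Real.exp (-c) ^ (k + 1) := by rw [h2, h1]
      _ ≤ Real.exp (-c) ^ k := by
          rw [pow_succ]
          exact mul_le_of_le_one_right (by positivity) hlt.le

lemma im_lin (a b c : ℝ) (τ z₁ z₂ : ℂ) :
    ((a : ℂ) * τ + (b : ℂ) * z₁ + (c : ℂ) * z₂).im = a * τ.im + b * z₁.im + c * z₂.im := by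
  rw [Complex.add_im, Complex.add_im, Complex.im_ofReal_mul, Complex.im_ofReal_mul,
    Complex.im_ofReal_mul]

lemma norm_sgn (t : ℝ) : ‖sgn t‖ = 1 := by
  rw [sgn]; split_ifs <;> simp

lemma inner_hasSum (τ : ℂ) (hτ : 0 < τ.im) (z₁ z₂ : ℂ)
    (h₁ : 0 < al τ z₁) (h₁' : al τ z₁ < 1) (h₂ : notInt (al τ z₂)) (m : ℤ) :
    HasSum (fun n : ℤ => gterm τ z₁ z₂ (m, n))
      (e (τ * m ^ 2 / 2 + m * (z₁ + z₂)) / (1 - e (m * τ + z₂))) := by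
  set α₁ := al τ z₁ with hα₁
  set α₂ := al τ z₂ with hα₂
  set q := e ((m : ℂ) * τ + z₂) with hq
  set c := e (τ * (m : ℂ) ^ 2 / 2 + (m : ℂ) * (z₁ + z₂)) with hc
  have hmne : ((m : ℝ) + α₂) ≠ 0 := by
    intro h
    exact h₂ (-m) (by push_cast; linarith)
  have hval : ∀ n : ℤ, e (((n : ℂ) + (m : ℂ) / 2) * (m : ℂ) * τ + (m : ℂ) * z₁ +
      ((m : ℂ) + (n : ℂ)) * z₂) = c * q ^ n := by
    intro n
    rw [hc, hq, ← e_int, ← e_add]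
    congr 1
    ring
  have hterm : ∀ n : ℤ, gterm τ z₁ z₂ (m, n) =
      if 0 < ((n : ℝ) + α₁) * ((m : ℝ) + α₂) then sgn ((m : ℝ) + α₂) * (c * q ^ n) else 0 := by
    intro n
    rw [gterm]
    simp only [hval n]
    rfl
  have hqim : ((m : ℂ) * τ + z₂).im = τ.im * ((m : ℝ) + α₂) := by
    have : ((m : ℂ) * τ + z₂).im = (m : ℝ) * τ.im + z₂.im := by
      rw [Complex.add_im]
      congr 1
      rw [show ((m : ℂ) * τ) = (((m : ℝ) : ℂ) * τ) by push_cast; ring, Complex.im_ofReal_mul]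
    rw [this, hα₂, al]
    field_simp
  have hnormq : ‖q‖ = Real.exp (-(2 * Real.pi * (τ.im * ((m : ℝ) + α₂)))) := by
    rw [hq, norm_e, hqim]
  have hpi := Real.pi_pos
  rcases hmne.lt_or_gt with hneg | hpos
  · -- m + α₂ < 0 : support is n ≤ -1
    have hq1 : 1 < ‖q‖ := by
      rw [hnormq]
      rw [show (1 : ℝ) = Real.exp 0 by simp]
      apply Real.exp_lt_exp.2
      have h' : τ.im * ((m : ℝ) + α₂) < 0 := mul_neg_of_pos_of_neg hτ hneg
      have h'' : 2 * Real.pi * (τ.im * ((m : ℝ) + α₂)) < 0 :=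
        mul_neg_of_pos_of_neg (by positivity) h'
      linarith
    have hq0 : q ≠ 0 := e_ne_zero _
    have hqne1 : q ≠ 1 := by intro h; rw [h] at hq1; simp at hq1
    have h1q : (1 : ℂ) - q ≠ 0 := sub_ne_zero.2 (Ne.symm hqne1)
    have hinv : ‖q⁻¹‖ < 1 := by
      rw [norm_inv]
      exact inv_lt_one_of_one_lt₀ hq1
    have hcond : ∀ n : ℤ, (0 < ((n : ℝ) + α₁) * ((m : ℝ) + α₂)) ↔ n < 0 := by
      intro n
      constructor
      · intro h
        by_contra hge
        push_neg at hge
        have : (0 : ℝ) ≤ (n : ℝ) := by exact_mod_cast hge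
        nlinarith
      · intro h
        have hn' : n ≤ -1 := by omega
        have hn1 : (n : ℝ) ≤ -1 := by exact_mod_cast hn'
        nlinarith
    have hsgn : sgn ((m : ℝ) + α₂) = -1 := by rw [sgn, if_neg (by linarith)]
    have hfun : (fun n : ℤ => gterm τ z₁ z₂ (m, n)) =
        fun n : ℤ => if n < 0 then -(c * q ^ n) else 0 := by
      funext n
      rw [hterm n, hsgn]
      by_cases hn : n < 0
      · rw [if_pos ((hcond n).2 hn), if_pos hn]; ring
      · rw [if_neg (fun h => hn ((hcond n).1 h)), if_neg hn]
    rw [hfun]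
    have hgeo : HasSum (fun k : ℕ => -((c * q⁻¹) * (q⁻¹) ^ k)) (-((c * q⁻¹) * (1 - q⁻¹)⁻¹)) :=
      ((hasSum_geometric_of_norm_lt_one hinv).mul_left (c * q⁻¹)).neg
    have part2 : HasSum (fun k : ℕ =>
        if (-((k : ℤ) + 1)) < 0 then -(c * q ^ (-((k : ℤ) + 1))) else 0)
        (-((c * q⁻¹) * (1 - q⁻¹)⁻¹)) := by
      refine hgeo.congr_fun fun k => ?_
      rw [if_pos (by omega)]
      congr 1
      rw [show (-((k : ℤ) + 1)) = -((k + 1 : ℕ) : ℤ) by push_cast; ring, zpow_neg,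
        zpow_natCast, pow_succ, mul_inv, mul_comm (q ^ k)⁻¹ q⁻¹, inv_pow]
      ring
    have part1 : HasSum (fun k : ℕ =>
        if ((k : ℤ)) < 0 then -(c * q ^ ((k : ℤ))) else 0) 0 := by
      refine hasSum_zero.congr_fun fun k => ?_
      rw [if_neg (by omega)]
    have hqinv1 : q⁻¹ ≠ 1 := by intro h; rw [h] at hinv; simp at hinv
    have h1qi : (1 : ℂ) - q⁻¹ ≠ 0 := sub_ne_zero.2 (Ne.symm hqinv1)
    have := HasSum.of_nat_of_neg_add_one
      (f := fun n : ℤ => if n < 0 then -(c * q ^ n) else 0) part1 part2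
    convert this using 1
    rw [zero_add]
    have hq1' : q - 1 ≠ 0 := sub_ne_zero.2 hqne1
    have hkey : (1 : ℂ) - q⁻¹ = (q - 1) / q := by field_simp
    rw [hkey, inv_div]
    rw [div_eq_iff h1q]
    field_simp
    ring
  · -- 0 < m + α₂ : support is 0 ≤ n
    have hqlt : ‖q‖ < 1 := by
      rw [hnormq]
      apply Real.exp_lt_one_iff.2
      have h'' : 0 < 2 * Real.pi * (τ.im * ((m : ℝ) + α₂)) :=
        mul_pos (by positivity) (mul_pos hτ hpos)
      linarith
    have hcond : ∀ n : ℤ, (0 < ((n : ℝ) + α₁) * ((m : ℝ) + α₂)) ↔ 0 ≤ n := by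
      intro n
      constructor
      · intro h
        by_contra hge
        push_neg at hge
        have hn' : n ≤ -1 := by omega
        have hn1 : (n : ℝ) ≤ -1 := by exact_mod_cast hn'
        nlinarith
      · intro h
        have : (0 : ℝ) ≤ (n : ℝ) := by exact_mod_cast h
        nlinarith
    have hsgn : sgn ((m : ℝ) + α₂) = 1 := by rw [sgn, if_pos hpos]
    have hfun : (fun n : ℤ => gterm τ z₁ z₂ (m, n)) =
        fun n : ℤ => if 0 ≤ n then c * q ^ n else 0 := by
      funext n
      rw [hterm n, hsgn]
      by_cases hn : 0 ≤ n
      · rw [if_pos ((hcond n).2 hn), if_pos hn, one_mul]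
      · rw [if_neg (fun h => hn ((hcond n).1 h)), if_neg hn]
    rw [hfun]
    have hgeo : HasSum (fun k : ℕ => c * q ^ k) (c * (1 - q)⁻¹) :=
      (hasSum_geometric_of_norm_lt_one hqlt).mul_left c
    have part1 : HasSum (fun k : ℕ =>
        if (0:ℤ) ≤ ((k : ℕ) : ℤ) then c * q ^ ((k : ℕ) : ℤ) else 0) (c * (1 - q)⁻¹) := by
      refine hgeo.congr_fun fun k => ?_
      rw [if_pos (by omega), zpow_natCast]
    have part2 : HasSum (fun k : ℕ =>
        if (0:ℤ) ≤ (-((k : ℤ) + 1)) then c * q ^ (-((k : ℤ) + 1)) else 0) 0 := by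
      refine hasSum_zero.congr_fun fun k => ?_
      rw [if_neg (by omega)]
    have := HasSum.of_nat_of_neg_add_one
      (f := fun n : ℤ => if 0 ≤ n then c * q ^ n else 0) part1 part2
    convert this using 1
    rw [add_zero, div_eq_mul_inv]

theorem stmt13 (τ : ℂ) (hτ : 0 < τ.im) (z₁ z₂ : ℂ)
    (h₁ : 0 < al τ z₁) (h₁' : al τ z₁ < 1) (h₂ : notInt (al τ z₂)) :
    gF z₁ z₂ τ = g0 z₁ z₂ τ := by
  have hpi := Real.pi_pos
  set α₁ := al τ z₁ with hα₁
  set α₂ := al τ z₂ with hα₂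
  set y := τ.im with hy'
  have hy : y ≠ 0 := ne_of_gt hτ
  have hf1 : Int.fract α₂ < 1 := Int.fract_lt_one _
  have hf0 : 0 < Int.fract α₂ := by
    rcases (Int.fract_nonneg α₂).lt_or_eq with h | h
    · exact h
    · exfalso
      apply h₂ ⌊α₂⌋
      have hfl := Int.floor_add_fract α₂
      linarith
  set δ := min (Int.fract α₂) (1 - Int.fract α₂) with hδ
  have hδ0 : 0 < δ := lt_min hf0 (by linarith)
  have hδf : δ ≤ Int.fract α₂ := min_le_left _ _
  have hδf' : δ ≤ 1 - Int.fract α₂ := min_le_right _ _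
  have hfloor : ∀ m : ℤ, ((m : ℝ) + α₂) = ((m + ⌊α₂⌋ : ℤ) : ℝ) + Int.fract α₂ := by
    intro m
    have hfl := Int.floor_add_fract α₂
    push_cast
    linarith
  have hdist : ∀ m : ℤ, (0 < (m : ℝ) + α₂ → δ ≤ (m : ℝ) + α₂) ∧
      ((m : ℝ) + α₂ < 0 → δ ≤ -((m : ℝ) + α₂)) := by
    intro m
    constructor
    · intro hposm
      have hk : (0 : ℤ) ≤ m + ⌊α₂⌋ := by
        by_contra hk
        push_neg at hk
        have hk1 : m + ⌊α₂⌋ ≤ -1 := by omega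
        have hk2 : ((m + ⌊α₂⌋ : ℤ) : ℝ) ≤ -1 := by exact_mod_cast hk1
        rw [hfloor m] at hposm
        linarith
      have hk2 : (0 : ℝ) ≤ ((m + ⌊α₂⌋ : ℤ) : ℝ) := by exact_mod_cast hk
      rw [hfloor m]
      linarith
    · intro hnegm
      have hk : m + ⌊α₂⌋ ≤ -1 := by
        by_contra hk
        push_neg at hk
        have hk1 : (0 : ℤ) ≤ m + ⌊α₂⌋ := by omega
        have hk2 : (0 : ℝ) ≤ ((m + ⌊α₂⌋ : ℤ) : ℝ) := by exact_mod_cast hk1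
        rw [hfloor m] at hnegm
        linarith
      have hk2 : ((m + ⌊α₂⌋ : ℤ) : ℝ) ≤ -1 := by exact_mod_cast hk
      rw [hfloor m]
      linarith
  set a := α₁ + α₂ with ha
  set F : ℤ → ℝ := fun m => Real.exp ((2 * Real.pi * y) * (a ^ 2 - (m : ℝ) ^ 2 / 4)) with hF
  set G : ℤ → ℝ := fun n => Real.exp (-(2 * Real.pi * y * δ * |(n : ℝ)|)) with hG
  have hFsum : Summable F := by
    have hc : 0 < Real.pi * y / 2 := by positivity
    refine Summable.of_nonneg_of_le (fun m => Real.exp_nonneg _)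
      (fun m => ?_) ((sumexp hc).mul_left (Real.exp ((2 * Real.pi * y) * a ^ 2)))
    simp only [hF]
    rw [← Real.exp_add]
    apply Real.exp_le_exp.2
    have hm : |(m : ℝ)| ≤ (m : ℝ) ^ 2 := by
      rcases eq_or_ne m 0 with rfl | hm0
      · simp
      · have h1 : (1 : ℝ) ≤ |(m : ℝ)| := by
          have h2 : (1 : ℤ) ≤ |m| := Int.one_le_abs hm0
          calc (1 : ℝ) ≤ ((|m| : ℤ) : ℝ) := by exact_mod_cast h2
            _ = |(m : ℝ)| := by push_cast; rfl
        nlinarith [_root_.sq_abs (m : ℝ)]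
    nlinarith [mul_nonneg (le_of_lt hc) (sub_nonneg.2 hm)]
  have hGsum : Summable G := sumexp (by positivity)
  have hz1 : z₁.im = α₁ * y := (div_mul_cancel₀ z₁.im hy).symm
  have hz2 : z₂.im = α₂ * y := (div_mul_cancel₀ z₂.im hy).symm
  have key : ∀ p : ℤ × ℤ, ‖gterm τ z₁ z₂ p‖ ≤ F p.1 * G p.2 := by
    rintro ⟨m, n⟩
    rw [gterm]
    split_ifs with hcondp
    · simp only at hcondp
      rw [norm_mul, norm_sgn, one_mul, norm_e]
      have hcast : (((n : ℂ) + (m : ℂ) / 2) * (m : ℂ) * τ + (m : ℂ) * z₁ +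
          ((m : ℂ) + (n : ℂ)) * z₂)
          = ((((n : ℝ) + (m : ℝ) / 2) * (m : ℝ) : ℝ) : ℂ) * τ + (((m : ℝ) : ℝ) : ℂ) * z₁
            + ((((m : ℝ) + (n : ℝ)) : ℝ) : ℂ) * z₂ := by push_cast; ring
      rw [hcast, im_lin, hz1, hz2]
      simp only [hF, hG]
      rw [← Real.exp_add]
      apply Real.exp_le_exp.2
      have hmne : ((m : ℝ) + α₂) ≠ 0 := fun h => h₂ (-m) (by push_cast; linarith)
      have h1 : |(n : ℝ)| * δ ≤ (n : ℝ) * ((m : ℝ) + α₂) := by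
        rcases hmne.lt_or_gt with hmn | hmp
        · have hδm := (hdist m).2 hmn
          have hn : (n : ℝ) + α₁ < 0 := by
            by_contra hcon
            push_neg at hcon
            nlinarith [mul_nonpos_of_nonneg_of_nonpos hcon hmn.le]
          have hn' : n ≤ -1 := by
            by_contra hge
            push_neg at hge
            have : (0 : ℝ) ≤ (n : ℝ) := by exact_mod_cast (by omega : (0 : ℤ) ≤ n)
            linarith
          have hnr : (n : ℝ) ≤ -1 := by exact_mod_cast hn'
          rw [_root_.abs_of_nonpos (by linarith)]
          nlinarith [mul_le_mul_of_nonneg_left hδm (by linarith : (0 : ℝ) ≤ -(n : ℝ))]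
        · have hδm := (hdist m).1 hmp
          have hn : 0 < (n : ℝ) + α₁ := by
            by_contra hcon
            push_neg at hcon
            nlinarith [mul_nonpos_of_nonpos_of_nonneg hcon hmp.le]
          have hn' : 0 ≤ n := by
            by_contra hge
            push_neg at hge
            have : (n : ℝ) ≤ -1 := by exact_mod_cast (by omega : n ≤ -1)
            linarith
          have hnr : (0 : ℝ) ≤ (n : ℝ) := by exact_mod_cast hn'
          rw [_root_.abs_of_nonneg hnr]
          nlinarith [mul_le_mul_of_nonneg_left hδm hnr]
      have h2 : (0 : ℝ) ≤ ((m : ℝ) / 2 + a) ^ 2 := sq_nonneg _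
      have h3 : (0 : ℝ) < 2 * Real.pi * y := by positivity
      nlinarith [mul_nonneg h3.le (sub_nonneg.2 h1), mul_nonneg h3.le h2]
    · rw [norm_zero]
      have : (0:ℝ) < F m * G n := by
        simp only [hF, hG]
        positivity
      linarith
  have hsum : Summable (gterm τ z₁ z₂) := by
    apply Summable.of_norm
    apply Summable.of_nonneg_of_le (fun p => norm_nonneg _) key
    exact hFsum.mul_of_nonneg hGsum
      (fun m => Real.exp_nonneg _) (fun n => Real.exp_nonneg _)
  have hin := inner_hasSum τ hτ z₁ z₂ h₁ h₁' h₂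
  rw [gF, g0, Summable.tsum_prod' hsum fun m => (hin m).summable]
  exact tsum_congr fun m => (hin m).tsum_eq
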